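/- arXiv:1412.0827 — 6 statements merged into one kernel-verified Lean document; each statement's English description precedes it below -/
import Mathlib

section
/- Let (μ_k)_{k≥1} be a strictly increasing sequence of positive real numbers with ∑_{k=1}^{∞} 1/μ_k = +∞ and let c₃ > 1. For m ∈ ℕ let m₁(m) denote the least integer N ≥ m such that ∑_{k=m}^{N} 1/μ_k > c₃/μ_m. Define m₀ := 1, m_1 := m₁(1), and recursively m_{ν+1} := m₁(m_ν + 1) for ν ≥ 1. Then for every ν ≥ 1 one has ∑_{k=1}^{m_{ν+1}} 1/μ_k < (c₃ + 1) · ∑_{k=0}^{ν} 1/μ_{m_k}. -/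
/-! Until its last term, each block `[m_ν + 1, m_{ν+1}]` sums to at most `c₃ / μ_{m_ν + 1}`, and
its last term is at most `1 / μ_{m_ν + 1}`; since `μ_{m_ν} < μ_{m_ν + 1}`, the block contributes
strictly less than `(c₃ + 1) / μ_{m_ν}`. The first block `[1, m_1]` contributes at most
`(c₃ + 1) / μ_1`, and summing the blocks gives the bound. -/

open Finset

theorem Finset.sum_Icc_one_add_sum_Icc {M : Type*} [AddCommMonoid M] (f : ℕ → M) {n N : ℕ}
    (hnN : n ≤ N) :
    ∑ k ∈ Icc 1 n, f k + ∑ k ∈ Icc (n + 1) N, f k = ∑ k ∈ Icc 1 N, f k := by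
  have hIcc_one (K : ℕ) : Icc 1 K = Ioc 0 K := Icc_add_one_left_eq_Ioc 0 K
  rw [hIcc_one, hIcc_one, Icc_add_one_left_eq_Ioc]
  exact sum_Ioc_consecutive f (Nat.zero_le n) hnN

theorem Finset.sum_Icc_le_add_of_forall_lt {α : Type*} [AddCommMonoid α] [PartialOrder α]
    [IsOrderedAddMonoid α] {a : ℕ → α} {t : α} {m M : ℕ} (ht : 0 ≤ t) (hmM : m ≤ M)
    (hbelow : ∀ N, m ≤ N → N < M → ∑ k ∈ Icc m N, a k ≤ t) :
    ∑ k ∈ Icc m M, a k ≤ t + a M := by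
  obtain rfl | hlt := hmM.eq_or_lt
  · simpa only [Icc_self, sum_singleton] using le_add_of_nonneg_left ht
  · obtain ⟨N, rfl⟩ : ∃ N, M = N + 1 := ⟨M - 1, by omega⟩
    rw [sum_Icc_succ_top (by omega)]
    exact add_le_add_left (hbelow N (by omega) (by omega)) _

section Reciprocals

variable {μ : ℕ → ℝ} {c : ℝ} {m M : ℕ}

theorem sum_Icc_inv_le_of_forall_lt (hc : 0 ≤ c) (hμm : 0 < μ m) (hμ : μ m ≤ μ M)
    (hmM : m ≤ M) (hbelow : ∀ N, m ≤ N → N < M → ∑ k ∈ Icc m N, (μ k)⁻¹ ≤ c / μ m) :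
    ∑ k ∈ Icc m M, (μ k)⁻¹ ≤ (c + 1) * (μ m)⁻¹ :=
  calc ∑ k ∈ Icc m M, (μ k)⁻¹
      ≤ c / μ m + (μ M)⁻¹ := sum_Icc_le_add_of_forall_lt (by positivity) hmM hbelow
    _ ≤ c / μ m + (μ m)⁻¹ := by gcongr
    _ = (c + 1) * (μ m)⁻¹ := by ring

theorem sum_Icc_succ_inv_lt_of_forall_lt (hc : 0 ≤ c) (hμm : 0 < μ m) (hμ : StrictMono μ)
    (hmM : m + 1 ≤ M)
    (hbelow : ∀ N, m + 1 ≤ N → N < M → ∑ k ∈ Icc (m + 1) N, (μ k)⁻¹ ≤ c / μ (m + 1)) :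
    ∑ k ∈ Icc (m + 1) M, (μ k)⁻¹ < (c + 1) * (μ m)⁻¹ := by
  have hμm' : μ m < μ (m + 1) := hμ (Nat.lt_succ_self m)
  calc ∑ k ∈ Icc (m + 1) M, (μ k)⁻¹
      ≤ (c + 1) * (μ (m + 1))⁻¹ :=
        sum_Icc_inv_le_of_forall_lt hc (hμm.trans hμm') (hμ.monotone hmM) hmM hbelow
    _ < (c + 1) * (μ m)⁻¹ := by gcongr

end Reciprocals

theorem partial_sum_bound_via_blocks_general
    (μ : ℕ → ℝ) (hpos : ∀ k, 0 < μ k) (hmono : StrictMono μ)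
    (c₃ : ℝ) (hc₃ : 1 < c₃)
    (M1 : ℕ → ℕ)
    (hM1 : ∀ m : ℕ, 1 ≤ m →
      m ≤ M1 m ∧ c₃ / μ m < ∑ k ∈ Finset.Icc m (M1 m), (μ k)⁻¹ ∧
      ∀ N : ℕ, m ≤ N → N < M1 m → ∑ k ∈ Finset.Icc m N, (μ k)⁻¹ ≤ c₃ / μ m)
    (ms : ℕ → ℕ) (hms0 : ms 0 = 1) (hms1 : ms 1 = M1 1)
    (hmsrec : ∀ ν : ℕ, 1 ≤ ν → ms (ν + 1) = M1 (ms ν + 1)) :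
    ∀ ν : ℕ, 1 ≤ ν →
      ∑ k ∈ Finset.Icc 1 (ms (ν + 1)), (μ k)⁻¹ <
        (c₃ + 1) * ∑ k ∈ Finset.range (ν + 1), (μ (ms k))⁻¹ := by
  have hc₃' : 0 ≤ c₃ := by linarith
  have hfirst : ∑ k ∈ Icc 1 (ms 1), (μ k)⁻¹ ≤ (c₃ + 1) * (μ (ms 0))⁻¹ := by
    obtain ⟨hle, -, hbelow⟩ := hM1 1 le_rfl
    rw [hms0, hms1]
    exact sum_Icc_inv_le_of_forall_lt hc₃' (hpos 1) (hmono.monotone hle) hle hbelow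
  have hstep : ∀ ν, 1 ≤ ν → ∑ k ∈ Icc 1 (ms (ν + 1)), (μ k)⁻¹ <
      ∑ k ∈ Icc 1 (ms ν), (μ k)⁻¹ + (c₃ + 1) * (μ (ms ν))⁻¹ := by
    intro ν hν
    obtain ⟨hle, -, hbelow⟩ := hM1 (ms ν + 1) (by omega)
    rw [hmsrec ν hν, ← sum_Icc_one_add_sum_Icc _ (by omega : ms ν ≤ M1 (ms ν + 1))]
    gcongr
    exact sum_Icc_succ_inv_lt_of_forall_lt hc₃' (hpos _) hmono hle hbelow
  have hbound : ∀ ν, ∑ k ∈ Icc 1 (ms (ν + 1)), (μ k)⁻¹ ≤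
      (c₃ + 1) * ∑ k ∈ range (ν + 1), (μ (ms k))⁻¹ := by
    intro ν
    induction ν with
    | zero => simpa using hfirst
    | succ ν ih =>
      rw [sum_range_succ, mul_add]
      linarith [hstep (ν + 1) (by omega)]
  intro ν hν
  obtain ⟨ν, rfl⟩ : ∃ n, ν = n + 1 := ⟨ν - 1, by omega⟩
  rw [sum_range_succ, mul_add]
  linarith [hstep (ν + 1) hν, hbound ν]

theorem partial_sum_bound_via_blocks
    (μ : ℕ → ℝ) (hpos : ∀ k, 0 < μ k) (hmono : StrictMono μ)
    (hdiv : Filter.Tendsto (fun N => ∑ k ∈ Finset.Icc 1 N, (μ k)⁻¹)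
      Filter.atTop Filter.atTop)
    (c₃ : ℝ) (hc₃ : 1 < c₃)
    (M1 : ℕ → ℕ)
    (hM1 : ∀ m : ℕ, 1 ≤ m →
      m ≤ M1 m ∧ c₃ / μ m < ∑ k ∈ Finset.Icc m (M1 m), (μ k)⁻¹ ∧
      ∀ N : ℕ, m ≤ N → N < M1 m → ∑ k ∈ Finset.Icc m N, (μ k)⁻¹ ≤ c₃ / μ m)
    (ms : ℕ → ℕ) (hms0 : ms 0 = 1) (hms1 : ms 1 = M1 1)
    (hmsrec : ∀ ν : ℕ, 1 ≤ ν → ms (ν + 1) = M1 (ms ν + 1)) :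
    ∀ ν : ℕ, 1 ≤ ν →
      ∑ k ∈ Finset.Icc 1 (ms (ν + 1)), (μ k)⁻¹ <
        (c₃ + 1) * ∑ k ∈ Finset.range (ν + 1), (μ (ms k))⁻¹ :=
  partial_sum_bound_via_blocks_general μ hpos hmono c₃ hc₃ M1 hM1 ms hms0 hms1 hmsrec
end

section
/- Let (μ_k)_{k≥1} be a strictly increasing sequence of positive real numbers with ∑_{k=1}^{∞} 1/μ_k = +∞ and let c₃ > 1. For m ∈ ℕ let m₁(m) denote the least integer N ≥ m such that ∑_{k=m}^{N} 1/μ_k > c₃/μ_m. Define m₀ := 1, m_1 := m₁(1), and recursively m_{ν+1} := m₁(m_ν + 1) for ν ≥ 1. Then ∑_{ν=0}^{∞} 1/μ_{m_ν} = +∞. In particular, for any r₀ > 0 and c₂ > 0, the sequence r_ν := r₀ + c₂ · ∑_{k=1}^{ν} 1/μ_{m_k} tends to +∞ as ν → +∞. -/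
open Filter Topology

theorem radii_tendsto_atTop
    (μ : ℕ → ℝ) (hpos : ∀ k, 0 < μ k) (hmono : StrictMono μ)
    (hdiv : Filter.Tendsto (fun N => ∑ k ∈ Finset.Icc 1 N, (μ k)⁻¹)
      Filter.atTop Filter.atTop)
    (c₃ : ℝ) (hc₃ : 1 < c₃)
    (M1 : ℕ → ℕ)
    (hM1 : ∀ m : ℕ, 1 ≤ m →
      m ≤ M1 m ∧ c₃ / μ m < ∑ k ∈ Finset.Icc m (M1 m), (μ k)⁻¹ ∧
      ∀ N : ℕ, m ≤ N → N < M1 m → ∑ k ∈ Finset.Icc m N, (μ k)⁻¹ ≤ c₃ / μ m)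
    (ms : ℕ → ℕ) (hms0 : ms 0 = 1) (hms1 : ms 1 = M1 1)
    (hmsrec : ∀ ν : ℕ, 1 ≤ ν → ms (ν + 1) = M1 (ms ν + 1)) :
    Filter.Tendsto (fun N => ∑ ν ∈ Finset.range N, (μ (ms ν))⁻¹)
      Filter.atTop Filter.atTop ∧
    ∀ r₀ c₂ : ℝ, 0 < r₀ → 0 < c₂ →
      Filter.Tendsto (fun ν => r₀ + c₂ * ∑ k ∈ Finset.Icc 1 ν, (μ (ms k))⁻¹)
        Filter.atTop Filter.atTop := by
  -- m < M1 m
  have hlt : ∀ m, 1 ≤ m → m < M1 m := by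
    intro m hm
    obtain ⟨h1, h2, _⟩ := hM1 m hm
    rcases lt_or_eq_of_le h1 with h | h
    · exact h
    · exfalso
      rw [← h, Finset.Icc_self, Finset.sum_singleton] at h2
      have hp := hpos m
      rw [div_lt_iff₀ hp] at h2
      rw [inv_mul_cancel₀ (ne_of_gt hp)] at h2
      linarith
  -- block bound
  have hB : ∀ m, 1 ≤ m → ∑ k ∈ Finset.Icc m (M1 m), (μ k)⁻¹ ≤ (c₃ + 1) * (μ m)⁻¹ := by
    intro m hm
    obtain ⟨h1, h2, h3⟩ := hM1 m hm
    have hltm := hlt m hm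
    obtain ⟨p, hp⟩ : ∃ p, M1 m = p + 1 := ⟨M1 m - 1, by omega⟩
    have hmp : m ≤ p := by omega
    rw [hp, Finset.sum_Icc_succ_top (by omega)]
    have hb1 : ∑ k ∈ Finset.Icc m p, (μ k)⁻¹ ≤ c₃ / μ m := h3 p hmp (by omega)
    have hb2 : (μ (p + 1))⁻¹ ≤ (μ m)⁻¹ := by
      have : μ m ≤ μ (p + 1) := le_of_lt (hmono (by omega))
      exact inv_anti₀ (hpos m) this
    have hdiv' : c₃ / μ m = c₃ * (μ m)⁻¹ := div_eq_mul_inv _ _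
    rw [hdiv'] at hb1
    linarith
  have hms_ge1 : ∀ ν, 1 ≤ ms ν := by
    intro ν
    induction ν with
    | zero => omega
    | succ n ih =>
      rcases Nat.eq_zero_or_pos n with h | h
      · subst h; rw [hms1]
        have := hlt 1 le_rfl; omega
      · rw [hmsrec n h]
        have := (hM1 (ms n + 1) (by omega)).1; omega
  have hms_succ : ∀ ν, ms ν + 1 ≤ ms (ν + 1) := by
    intro ν
    rcases Nat.eq_zero_or_pos ν with h | h
    · subst h; rw [hms0, hms1]
      exact hlt 1 le_rfl
    · rw [hmsrec ν h]
      exact le_of_lt (hlt (ms ν + 1) (by omega))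
  have hms_ge : ∀ ν, ν ≤ ms ν := by
    intro ν
    induction ν with
    | zero => omega
    | succ n ih => have := hms_succ n; omega
  have hIcc1 : ∀ n : ℕ, Finset.Icc 1 n = Finset.Ioc 0 n := by
    intro n; ext x; simp; omega
  have hIccS : ∀ a b : ℕ, Finset.Icc (a + 1) b = Finset.Ioc a b := by
    intro a b; ext x; simp
  have hc₃pos : (0:ℝ) < c₃ + 1 := by linarith
  -- key: partial sums bound
  have hC : ∀ N, 1 ≤ N → ∑ k ∈ Finset.Icc 1 (ms N), (μ k)⁻¹ ≤
      (c₃ + 1) * ∑ ν ∈ Finset.range N, (μ (ms ν))⁻¹ := by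
    intro N hN
    induction N, hN using Nat.le_induction with
    | base =>
      rw [Finset.range_one, Finset.sum_singleton, hms0, hms1]
      simpa using hB 1 le_rfl
    | succ n hn ih =>
      have hsplit := Finset.sum_Ioc_consecutive (fun k => (μ k)⁻¹)
        (Nat.zero_le (ms n)) (le_trans (Nat.le_succ _) (hms_succ n))
      have hblock : ∑ k ∈ Finset.Ioc (ms n) (ms (n + 1)), (μ k)⁻¹ ≤
          (c₃ + 1) * (μ (ms n))⁻¹ := by
        rw [← hIccS, hmsrec n hn]
        have h1 := hB (ms n + 1) (by omega)
        have h2 : (μ (ms n + 1))⁻¹ ≤ (μ (ms n))⁻¹ :=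
          inv_anti₀ (hpos _) (le_of_lt (hmono (Nat.lt_succ_self _)))
        nlinarith
      rw [hIcc1] at ih ⊢
      rw [Finset.sum_range_succ, ← hsplit, mul_add]
      linarith
  have hmsTop : Tendsto ms atTop atTop := tendsto_atTop_mono hms_ge tendsto_id
  have h1 : Tendsto (fun N => ∑ k ∈ Finset.Icc 1 (ms N), (μ k)⁻¹) atTop atTop :=
    hdiv.comp hmsTop
  have key : Tendsto (fun N => ∑ ν ∈ Finset.range N, (μ (ms ν))⁻¹) atTop atTop := by
    refine tendsto_atTop_mono' atTop ?_ (h1.const_mul_atTop (inv_pos.mpr hc₃pos))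
    filter_upwards [eventually_ge_atTop 1] with N hN
    have := hC N hN
    rw [inv_mul_le_iff₀ hc₃pos]
    linarith
  refine ⟨key, ?_⟩
  intro r₀ c₂ hr₀ hc₂
  have hsum : ∀ ν : ℕ, ∑ k ∈ Finset.Icc 1 ν, (μ (ms k))⁻¹ =
      (∑ k ∈ Finset.range (ν + 1), (μ (ms k))⁻¹) - (μ (ms 0))⁻¹ := by
    intro ν
    have h0 : Finset.range (ν + 1) = insert 0 (Finset.Icc 1 ν) := by
      ext x; simp; omega
    rw [h0, Finset.sum_insert (by simp)]
    ring
  have h2 : Tendsto (fun ν => ∑ k ∈ Finset.Icc 1 ν, (μ (ms k))⁻¹) atTop atTop := by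
    simp only [hsum]
    exact tendsto_atTop_add_const_right _ _ (key.comp (tendsto_add_atTop_nat 1))
  have h3 : Tendsto (fun ν => c₂ * ∑ k ∈ Finset.Icc 1 ν, (μ (ms k))⁻¹) atTop atTop :=
    h2.const_mul_atTop hc₂
  exact tendsto_atTop_add_const_left atTop r₀ h3
end

section
/- Fix M₀ > 1. Define recursively a₁ := 1 and a_{n+1} := M₀ · (a_n + (⌊a_n⌋ + 1)!), and let D_n := { a_n + j : j = 0, 1, …, (⌊a_n⌋ + 1)! }. Let Λ = (λ_n)_{n≥1} be the increasing enumeration of ⋃_{n=1}^{∞} D_n. Then for every subsequence (μ_n) of Λ one has limsup_{n→∞} μ_{n+1}/μ_n ≥ M₀. -/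
open Filter Topology

/-- The block `D n = { a n + j : j = 0, 1, …, (⌊a n⌋ + 1)! }`. -/
def blockD (a : ℕ → ℝ) (n : ℕ) : Set ℝ :=
  {x : ℝ | ∃ j : ℕ, j ≤ Nat.factorial (Nat.floor (a n) + 1) ∧ x = a n + j}

theorem limsup_ratio_ge_M0_along_any_subsequence
    (M₀ : ℝ) (hM₀ : 1 < M₀)
    (a : ℕ → ℝ) (ha1 : a 1 = 1)
    (harec : ∀ n : ℕ, 1 ≤ n →
      a (n + 1) = M₀ * (a n + (Nat.factorial (Nat.floor (a n) + 1) : ℝ)))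
    (l : ℕ → ℝ) (hmono : StrictMono l)
    (hrange : Set.range l = ⋃ n ∈ {n : ℕ | 1 ≤ n}, blockD a n) :
    ∀ φ : ℕ → ℕ, StrictMono φ →
      (M₀ : EReal) ≤
        Filter.limsup (fun n => ((l (φ (n + 1)) / l (φ n) : ℝ) : EReal)) Filter.atTop := by
  intro φ hφ
  set F : ℕ → ℝ := fun n => (Nat.factorial (Nat.floor (a n) + 1) : ℝ) with hFdef
  have hF1 : ∀ n, (1:ℝ) ≤ F n := by
    intro n
    simp only [hFdef]
    exact_mod_cast Nat.one_le_iff_ne_zero.mpr (Nat.factorial_ne_zero _)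
  -- a n ≥ 1 for n ≥ 1
  have ha_ge : ∀ n, 1 ≤ n → (1:ℝ) ≤ a n := by
    intro n hn
    induction n with
    | zero => omega
    | succ m ih =>
      rcases Nat.lt_or_ge 1 (m+1) with h | h
      · have hm : 1 ≤ m := by omega
        have := harec m hm
        have ham := ih hm
        have hFm := hF1 m
        rw [this]
        nlinarith
      · have : m + 1 = 1 := by omega
        rw [this, ha1]
  -- a strictly increases one step
  have hstep : ∀ n, 1 ≤ n → a n + F n < a (n+1) := by
    intro n hn
    have := harec n hn
    have h1 := ha_ge n hn
    have h2 := hF1 n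
    rw [this]
    nlinarith
  -- a monotone on indices ≥ 1
  have ha_mono : ∀ j k, 1 ≤ j → j ≤ k → a j ≤ a k := by
    intro j k hj hjk
    induction k with
    | zero => omega
    | succ m ih =>
      rcases Nat.lt_or_ge m j with h | h
      · have : j = m + 1 := by omega
        rw [this]
      · have hm : 1 ≤ m := le_trans hj h
        have := hstep m hm
        have hFm := hF1 m
        have := ih h
        linarith
  -- bounds of a block
  have hmem : ∀ k x, x ∈ blockD a k → a k ≤ x ∧ x ≤ a k + F k := by
    intro k x hx
    obtain ⟨j, hj, rfl⟩ := hx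
    constructor
    · have : (0:ℝ) ≤ j := Nat.cast_nonneg j
      linarith
    · have : (j:ℝ) ≤ F k := by simp only [hFdef]; exact_mod_cast hj
      linarith
  -- block index function
  have hbex : ∀ m, ∃ k, 1 ≤ k ∧ l m ∈ blockD a k := by
    intro m
    have : l m ∈ Set.range l := Set.mem_range_self m
    rw [hrange] at this
    simpa using this
  choose b hb1 hb2 using hbex
  -- block index monotone along l
  have hbmono : ∀ m m', m < m' → b m ≤ b m' := by
    intro m m' hmm
    by_contra h
    push_neg at h
    have h1 := hmem _ _ (hb2 m)
    have h2 := hmem _ _ (hb2 m')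
    have hlt : a (b m') + F (b m') < a (b m' + 1) := hstep _ (hb1 m')
    have hle : a (b m' + 1) ≤ a (b m) := ha_mono _ _ (by omega) (by omega)
    have : l m' < l m := by linarith
    exact absurd (hmono hmm) (not_lt.mpr this.le)
  -- blocks are finite
  have hfin : ∀ k, (blockD a k).Finite := by
    intro k
    have : blockD a k ⊆ (fun j : ℕ => a k + (j:ℝ)) '' Set.Iic (Nat.factorial (Nat.floor (a k) + 1)) := by
      rintro x ⟨j, hj, rfl⟩
      exact ⟨j, hj, rfl⟩
    exact Set.Finite.subset ((Set.finite_Iic _).image _) this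
  -- frequently there is a block jump
  have hjump : ∀ N, ∃ n, N ≤ n ∧ b (φ n) < b (φ (n+1)) := by
    intro N
    by_contra h
    push_neg at h
    have hconst : ∀ d, b (φ (N + d)) = b (φ N) := by
      intro d
      induction d with
      | zero => rfl
      | succ m ih =>
        have h2 := h (N + m) (Nat.le_add_right N m)
        have h3 := hbmono (φ (N + m)) (φ (N + m + 1)) (hφ (Nat.lt_succ_self _))
        show b (φ (N + m + 1)) = b (φ N)
        omega
    have hsub : (fun n => l (φ n)) '' Set.Ici N ⊆ blockD a (b (φ N)) := by
      rintro x ⟨n, hn, rfl⟩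
      have h0 := hconst (n - N)
      rw [Nat.add_sub_cancel' hn] at h0
      rw [← h0]
      exact hb2 (φ n)
    have hinf : ((fun n => l (φ n)) '' Set.Ici N).Infinite := by
      apply Set.Infinite.image _ (Set.Ici_infinite N)
      intro x _ y _ hxy
      exact hφ.injective ((hmono.injective) hxy)
    exact hinf (Set.Finite.subset (hfin _) hsub)
  -- frequently the ratio is at least M₀
  have hfreq : ∃ᶠ n in atTop, (M₀ : EReal) ≤ ((l (φ (n + 1)) / l (φ n) : ℝ) : EReal) := by
    rw [Filter.frequently_atTop]
    intro N
    obtain ⟨n, hn, hbn⟩ := hjump N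
    refine ⟨n, hn, ?_⟩
    have h1 := hmem _ _ (hb2 (φ n))
    have h2 := hmem _ _ (hb2 (φ (n+1)))
    have hK1 := hb1 (φ n)
    have hpos : (0:ℝ) < l (φ n) := lt_of_lt_of_le one_pos (le_trans (ha_ge _ hK1) h1.1)
    have hstepK : a (b (φ n) + 1) = M₀ * (a (b (φ n)) + F (b (φ n))) := harec _ hK1
    have hle : a (b (φ n) + 1) ≤ a (b (φ (n+1))) := ha_mono _ _ (by omega) (by omega)
    have hM : M₀ * l (φ n) ≤ l (φ (n+1)) := by
      have : M₀ * l (φ n) ≤ M₀ * (a (b (φ n)) + F (b (φ n))) := by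
        apply mul_le_mul_of_nonneg_left h1.2 (le_of_lt (lt_trans one_pos hM₀))
      linarith [h2.1]
    have hratio : M₀ ≤ l (φ (n+1)) / l (φ n) := (le_div_iff₀ hpos).mpr hM
    exact_mod_cast hratio
  exact Filter.le_limsup_of_frequently_le hfreq
end

section
/- Fix M₀ > 1. Define recursively a₁ := 1 and a_{n+1} := M₀ · (a_n + (⌊a_n⌋ + 1)!), and let D_n := { a_n + j : j = 0, 1, …, (⌊a_n⌋ + 1)! }. Let Λ = (λ_n)_{n≥1} be the increasing enumeration of ⋃_{n=1}^{∞} D_n. Then limsup_{n→∞} λ_{n+1}/λ_n = M₀. -/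
open Filter Topology

theorem limsup_ratio_eq_M0
    (M₀ : ℝ) (hM₀ : 1 < M₀)
    (a : ℕ → ℝ) (ha1 : a 1 = 1)
    (harec : ∀ n : ℕ, 1 ≤ n →
      a (n + 1) = M₀ * (a n + (Nat.factorial (Nat.floor (a n) + 1) : ℝ)))
    (l : ℕ → ℝ) (hmono : StrictMono l)
    (hrange : Set.range l = ⋃ n ∈ {n : ℕ | 1 ≤ n}, blockD a n) :
    Filter.limsup (fun n => ((l (n + 1) / l n : ℝ) : EReal)) Filter.atTop = (M₀ : EReal) := by
  set F : ℕ → ℝ := fun k => (Nat.factorial (Nat.floor (a k) + 1) : ℝ) with hF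
  set S : Set ℝ := ⋃ n ∈ {n : ℕ | 1 ≤ n}, blockD a n with hSdef
  have hmem : ∀ x : ℝ, x ∈ S ↔ ∃ k, 1 ≤ k ∧ ∃ j : ℕ,
      j ≤ Nat.factorial (Nat.floor (a k) + 1) ∧ x = a k + j := by
    intro x
    simp [hSdef, blockD, Set.mem_iUnion]
  have hfact1 : ∀ k, (1 : ℝ) ≤ F k := by
    intro k
    simp only [hF]
    exact_mod_cast Nat.one_le_iff_ne_zero.mpr (Nat.factorial_ne_zero _)
  have ha_ge : ∀ k, 1 ≤ k → (1 : ℝ) ≤ a k := by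
    intro k hk
    induction k, hk using Nat.le_induction with
    | base => rw [ha1]
    | succ n hn ih =>
      rw [harec n hn]
      nlinarith [hfact1 n]
  have hb_lt : ∀ k, 1 ≤ k → a k + F k < a (k + 1) := by
    intro k hk
    rw [harec k hk]
    nlinarith [hfact1 k, ha_ge k hk]
  have hlt : ∀ m n, 1 ≤ m → m < n → a m + F m < a n := by
    intro m n hm hmn
    induction n, hmn using Nat.le_induction with
    | base => exact hb_lt m hm
    | succ n hn ih =>
      have hn1 : 1 ≤ n := le_trans hm (Nat.le_of_succ_le hn)
      calc a m + F m < a n := ih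
        _ ≤ a n + F n := by linarith [hfact1 n]
        _ < a (n + 1) := hb_lt n hn1
  have ha_le : ∀ k m, 1 ≤ k → k + 1 ≤ m → a (k + 1) ≤ a m := by
    intro k m hk hkm
    rcases eq_or_lt_of_le hkm with h | h
    · rw [h]
    · have := hlt (k + 1) m (by omega) h
      linarith [hfact1 (k + 1)]
  -- gap lemma within a block
  have hgap1 : ∀ k (j : ℕ), 1 ≤ k → j + 1 ≤ Nat.factorial (Nat.floor (a k) + 1) →
      ∀ y ∈ S, a k + (j : ℝ) < y → a k + (j : ℝ) + 1 ≤ y := by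
    intro k j hk hj y hy hlty
    obtain ⟨m, hm, j', hj', rfl⟩ := (hmem y).1 hy
    rcases lt_trichotomy m k with h | h | h
    · exfalso
      have h1 : a m + (j' : ℝ) ≤ a m + F m := by
        have : (j' : ℝ) ≤ F m := by simp only [hF]; exact_mod_cast hj'
        linarith
      have h2 : a m + F m < a k := hlt m k hm h
      have : (0:ℝ) ≤ (j:ℝ) := Nat.cast_nonneg j
      linarith
    · subst h
      have : (j : ℝ) < j' := by linarith
      have hjj : j < j' := by exact_mod_cast this
      have : (j : ℝ) + 1 ≤ j' := by exact_mod_cast hjj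
      linarith
    · have h1 : a (k + 1) ≤ a m := ha_le k m hk h
      have h2 : a k + F k < a (k + 1) := hb_lt k hk
      have h3 : (j : ℝ) + 1 ≤ F k := by simp only [hF]; exact_mod_cast hj
      have : (0:ℝ) ≤ (j':ℝ) := Nat.cast_nonneg j'
      linarith
  -- gap lemma at end of block
  have hgap2 : ∀ k, 1 ≤ k → ∀ y ∈ S, a k + F k < y → a (k + 1) ≤ y := by
    intro k hk y hy hlty
    obtain ⟨m, hm, j', hj', rfl⟩ := (hmem y).1 hy
    rcases lt_trichotomy m k with h | h | h
    · exfalso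
      have h1 : (j' : ℝ) ≤ F m := by simp only [hF]; exact_mod_cast hj'
      have h2 : a m + F m < a k := hlt m k hm h
      linarith [hfact1 k]
    · exfalso
      subst h
      have h1 : (j' : ℝ) ≤ F m := by simp only [hF]; exact_mod_cast hj'
      linarith
    · have h1 : a (k + 1) ≤ a m := ha_le k m hk h
      have : (0:ℝ) ≤ (j':ℝ) := Nat.cast_nonneg j'
      linarith
  have hlS : ∀ n, l n ∈ S := by
    intro n
    rw [← hrange]
    exact Set.mem_range_self n
  have hl1 : ∀ n, (1 : ℝ) ≤ l n := by
    intro n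
    obtain ⟨k, hk, j, hj, hjn⟩ := (hmem (l n)).1 (hlS n)
    have : (0:ℝ) ≤ (j:ℝ) := Nat.cast_nonneg j
    have := ha_ge k hk
    linarith [hjn ▸ (by linarith : a k + (j:ℝ) ≥ 1)]
  have hsucc : ∀ n y, y ∈ S → l n < y → l (n + 1) ≤ y := by
    intro n y hy hlt
    have : y ∈ Set.range l := by rw [hrange]; exact hy
    obtain ⟨m, rfl⟩ := this
    have hnm : n < m := hmono.lt_iff_lt.mp hlt
    exact hmono.monotone hnm
  have hstep1 : ∀ n k (j : ℕ), 1 ≤ k → j + 1 ≤ Nat.factorial (Nat.floor (a k) + 1) →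
      l n = a k + (j : ℝ) → l (n + 1) = l n + 1 := by
    intro n k j hk hj hln
    have hmem1 : l n + 1 ∈ S := by
      rw [hmem]
      exact ⟨k, hk, j + 1, hj, by rw [hln]; push_cast; ring⟩
    have h1 : l (n + 1) ≤ l n + 1 := hsucc n _ hmem1 (by linarith [hl1 n])
    have h2 : l n + 1 ≤ l (n + 1) := by
      have := hgap1 k j hk hj (l (n + 1)) (hlS (n + 1)) (by rw [← hln]; exact hmono (Nat.lt_succ_self n))
      linarith [this, hln ▸ (le_refl (l n))]
    linarith
  have hstep2 : ∀ n k, 1 ≤ k → l n = a k + F k → l (n + 1) = M₀ * l n := by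
    intro n k hk hln
    have hak1 : a (k + 1) = M₀ * l n := by rw [harec k hk, hln]
    have hmem1 : a (k + 1) ∈ S := by
      rw [hmem]
      exact ⟨k + 1, by omega, 0, Nat.zero_le _, by push_cast; ring⟩
    have hpos : (0 : ℝ) < l n := lt_of_lt_of_le one_pos (hl1 n)
    have hgt : l n < a (k + 1) := by rw [hak1]; nlinarith
    have h1 : l (n + 1) ≤ M₀ * l n := by rw [← hak1]; exact hsucc n _ hmem1 hgt
    have h2 : M₀ * l n ≤ l (n + 1) := by
      rw [← hak1]
      exact hgap2 k hk (l (n + 1)) (hlS (n + 1)) (by rw [← hln]; exact hmono (Nat.lt_succ_self n))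
    linarith
  have hkey : ∀ n, l (n + 1) = l n + 1 ∨ l (n + 1) = M₀ * l n := by
    intro n
    obtain ⟨k, hk, j, hj, hjn⟩ := (hmem (l n)).1 (hlS n)
    rcases lt_or_eq_of_le hj with h | h
    · exact Or.inl (hstep1 n k j hk h hjn)
    · refine Or.inr (hstep2 n k hk ?_)
      rw [hjn]
      simp only [hF]
      rw [h]
  -- a n ≥ n
  have ha_n : ∀ n : ℕ, 1 ≤ n → (n : ℝ) ≤ a n := by
    intro n hn
    induction n, hn using Nat.le_induction with
    | base => rw [ha1]; norm_num
    | succ n hn ih =>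
      rw [harec n hn]
      push_cast
      nlinarith [hfact1 n, ha_ge n hn]
  have hl_top : Filter.Tendsto l Filter.atTop Filter.atTop := by
    rw [Filter.tendsto_atTop]
    intro B
    set k : ℕ := max 1 ⌈B⌉₊ with hk
    have hk1 : 1 ≤ k := le_max_left _ _
    have hak : B ≤ a k := by
      calc B ≤ (⌈B⌉₊ : ℝ) := Nat.le_ceil B
        _ ≤ (k : ℝ) := by exact_mod_cast le_max_right 1 ⌈B⌉₊
        _ ≤ a k := ha_n k hk1
    have : a k ∈ S := by
      rw [hmem]
      exact ⟨k, hk1, 0, Nat.zero_le _, by push_cast; ring⟩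
    rw [← hrange] at this
    obtain ⟨m, hm⟩ := this
    filter_upwards [Filter.eventually_ge_atTop m] with n hn
    calc B ≤ a k := hak
      _ = l m := hm.symm
      _ ≤ l n := hmono.monotone hn
  -- eventually ratio ≤ M₀
  have hev : ∀ᶠ n in Filter.atTop, l (n + 1) / l n ≤ M₀ := by
    have h1 : ∀ᶠ n in Filter.atTop, 1 / (M₀ - 1) ≤ l n := hl_top.eventually_ge_atTop _
    filter_upwards [h1] with n hn
    have hpos : (0 : ℝ) < l n := lt_of_lt_of_le one_pos (hl1 n)
    rcases hkey n with h | h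
    · rw [h, div_le_iff₀ hpos]
      have hM1 : (0 : ℝ) < M₀ - 1 := by linarith
      have : 1 ≤ (M₀ - 1) * l n := by
        rw [div_le_iff₀ hM1] at hn
        linarith [hn]
      nlinarith
    · rw [h, mul_div_assoc, div_self (ne_of_gt hpos), mul_one]
  -- frequently ratio = M₀
  have hfreq : ∀ N : ℕ, ∃ m, N ≤ m ∧ l (m + 1) / l m = M₀ := by
    intro N
    set k : ℕ := max 1 (⌈l N⌉₊ + 1) with hk
    have hk1 : 1 ≤ k := le_max_left _ _
    have hak : l N < a k := by
      calc l N ≤ (⌈l N⌉₊ : ℝ) := Nat.le_ceil _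
        _ < ((⌈l N⌉₊ + 1 : ℕ) : ℝ) := by push_cast; linarith
        _ ≤ (k : ℝ) := by exact_mod_cast le_max_right 1 (⌈l N⌉₊ + 1)
        _ ≤ a k := ha_n k hk1
    have hbkS : a k + F k ∈ S := by
      rw [hmem]
      exact ⟨k, hk1, Nat.factorial (Nat.floor (a k) + 1), le_refl _, by simp only [hF]⟩
    have : a k + F k ∈ Set.range l := by rw [hrange]; exact hbkS
    obtain ⟨m, hm⟩ := this
    have hNm : N ≤ m := by
      by_contra h
      push_neg at h
      have : l m < l N := hmono h
      have : a k + F k < l N := hm ▸ this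
      linarith [hfact1 k]
    refine ⟨m, hNm, ?_⟩
    have := hstep2 m k hk1 hm
    rw [this, mul_div_assoc, div_self (ne_of_gt (lt_of_lt_of_le one_pos (hl1 m))), mul_one]
  -- conclude
  apply le_antisymm
  · exact Filter.limsup_le_of_le (by isBoundedDefault)
      (by filter_upwards [hev] with n hn; exact_mod_cast hn)
  · refine Filter.le_limsup_of_frequently_le ?_ (by isBoundedDefault)
    rw [Filter.frequently_atTop]
    intro N
    obtain ⟨m, hNm, hm⟩ := hfreq N
    exact ⟨m, hNm, by rw [hm]⟩
end

section
/- Fix M₀ > 1. Define recursively a₁ := 1 and a_{n+1} := M₀ · (a_n + (⌊a_n⌋ + 1)!), and let D_n := { a_n + j : j = 0, 1, …, (⌊a_n⌋ + 1)! }. Let Λ = (λ_n)_{n≥1} be the increasing enumeration of ⋃_{n=1}^{∞} D_n. Then Λ satisfies condition (Σ): for every M > 0 there exists a subsequence (μ_n) of Λ such that μ_{n+1} − μ_n > M for every n and ∑_{n=1}^{∞} 1/μ_n = +∞. -/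
/-!
Fix a step `s > M`. In a block `[a n, a n + K n]`, where `K n = (⌊a n⌋ + 1)! > a n`, the grid points
`a n + k s` are `s`-separated, and there are more than `K n / s` of them, each at most `2 K n`, so
their reciprocals add up to at least `1 / (2 s)`. The gaps `a (n + 1) - (a n + K n)` equal
`(M₀ - 1) (a n + K n)` and tend to infinity, so the grid points of all blocks beyond some `n₀`
form an `M`-separated subset of `Λ`. Enumerated increasingly, they give the subsequence; its
reciprocal series diverges since every block contributes at least `1 / (2 s)`.
-/

open Filter Topology

open Nat in
lemma lt_factorial_floor_add_one (x : ℝ) : x < ((⌊x⌋₊ + 1)! : ℝ) := by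
  calc x < ((⌊x⌋₊ + 1 : ℕ) : ℝ) := by push_cast; exact Nat.lt_floor_add_one x
    _ ≤ ((⌊x⌋₊ + 1)! : ℝ) := by exact_mod_cast Nat.self_le_factorial _

lemma exists_strictMono_range_comp_eq {α : Type*} {l : ℕ → α} {S : Set α}
    (hS : S ⊆ Set.range l) (hinf : S.Infinite) :
    ∃ φ : ℕ → ℕ, StrictMono φ ∧ Set.range (l ∘ φ) = S := by
  have himage : l '' (l ⁻¹' S) = S := Set.image_preimage_eq_of_subset hS
  have hT : (l ⁻¹' S).Infinite := Set.Infinite.of_image l (by rwa [himage])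
  refine ⟨Nat.nth (· ∈ l ⁻¹' S), Nat.nth_strictMono hT, ?_⟩
  rw [Set.range_comp, Nat.range_nth_of_infinite (p := (· ∈ l ⁻¹' S)) hT]
  exact himage

lemma tendsto_sum_range_comp_atTop {α : Type*} {g : ℕ → α} (hg : Function.Injective g)
    {f : α → ℝ} (hf : ∀ n, 0 ≤ f (g n))
    (hunb : ∀ C : ℝ, ∃ F : Finset α, ↑F ⊆ Set.range g ∧ C ≤ ∑ x ∈ F, f x) :
    Tendsto (fun N => ∑ n ∈ Finset.range N, f (g n)) atTop atTop := by
  rw [← not_summable_iff_tendsto_nat_atTop_of_nonneg hf]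
  intro hsum
  obtain ⟨F, hF, hC⟩ := hunb (∑' n, f (g n) + 1)
  have hle : ∑ x ∈ F, f x ≤ ∑' n, f (g n) := by
    rw [← Finset.sum_preimage g F hg.injOn f fun x hx hx' => absurd (hF hx) hx']
    exact hsum.sum_le_tsum _ fun n _ => hf n
  linarith

lemma inv_two_mul_le_sum_inv_add {x : ℝ} {K s : ℕ} (hx : 0 < x) (hxK : x ≤ K) (hs : 0 < s) :
    (2 * s : ℝ)⁻¹ ≤ ∑ k ∈ Finset.range (K / s + 1), (x + ((k * s : ℕ) : ℝ))⁻¹ := by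
  have hK : (0 : ℝ) < K := hx.trans_le hxK
  have hterm : ∀ k ∈ Finset.range (K / s + 1), (2 * K : ℝ)⁻¹ ≤ (x + ((k * s : ℕ) : ℝ))⁻¹ := by
    intro k hk
    have hks : k * s ≤ K :=
      (Nat.le_div_iff_mul_le hs).mp (Nat.lt_succ_iff.mp (Finset.mem_range.mp hk))
    have hks' : ((k * s : ℕ) : ℝ) ≤ K := by exact_mod_cast hks
    exact inv_anti₀ (by positivity) (by linarith)
  have hcount : (K : ℝ) / s ≤ ((K / s + 1 : ℕ) : ℝ) := by
    rw [div_le_iff₀ (by positivity)]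
    exact_mod_cast (Nat.succ_mul (K / s) s ▸ Nat.lt_div_mul_add hs).le
  calc (2 * s : ℝ)⁻¹ = (2 * K : ℝ)⁻¹ * (K / s) := by field_simp
    _ ≤ (2 * K : ℝ)⁻¹ * ((K / s + 1 : ℕ) : ℝ) := by gcongr
    _ = (Finset.range (K / s + 1)).card • (2 * K : ℝ)⁻¹ := by
      rw [Finset.card_range, nsmul_eq_mul, mul_comm]
    _ ≤ _ := Finset.card_nsmul_le_sum _ _ _ hterm

def blockGrid (b : ℕ → ℝ) (K : ℕ → ℕ) (s : ℕ) : Set ℝ :=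
  {x | ∃ n k : ℕ, k * s ≤ K n ∧ x = b n + ((k * s : ℕ) : ℝ)}

section blockGrid

variable {b : ℕ → ℝ} {K : ℕ → ℕ} {s : ℕ} {M : ℝ}

lemma strictMono_of_gap (hM : 0 ≤ M) (hgap : ∀ n, b n + K n + M < b (n + 1)) :
    StrictMono b :=
  strictMono_nat_of_lt_succ fun n => by linarith [hgap n, (K n).cast_nonneg (α := ℝ)]

lemma add_add_lt_of_gap (hM : 0 ≤ M) (hgap : ∀ n, b n + K n + M < b (n + 1)) {n m : ℕ}
    (h : n < m) : b n + K n + M < b m :=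
  (hgap n).trans_le ((strictMono_of_gap hM hgap).monotone h)

lemma pos_of_mem_blockGrid (hpos : ∀ n, 0 < b n) {x : ℝ} (hx : x ∈ blockGrid b K s) :
    0 < x := by
  obtain ⟨n, k, -, rfl⟩ := hx
  exact add_pos_of_pos_of_nonneg (hpos n) (Nat.cast_nonneg _)

lemma blockGrid_infinite (hM : 0 ≤ M) (hgap : ∀ n, b n + K n + M < b (n + 1)) :
    (blockGrid b K s).Infinite :=
  Set.infinite_of_injective_forall_mem
    (strictMono_of_gap hM hgap).injective
    fun n => ⟨n, 0, by simp, by simp⟩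

lemma sub_gt_of_mem_blockGrid (hM : 0 ≤ M) (hs : M < s)
    (hgap : ∀ n, b n + K n + M < b (n + 1)) {x y : ℝ} (hx : x ∈ blockGrid b K s)
    (hy : y ∈ blockGrid b K s) (hxy : x < y) : M < y - x := by
  obtain ⟨n, k, hk, rfl⟩ := hx
  obtain ⟨m, k', hk', rfl⟩ := hy
  have hkK : ((k * s : ℕ) : ℝ) ≤ K n := by exact_mod_cast hk
  have hk'K : ((k' * s : ℕ) : ℝ) ≤ K m := by exact_mod_cast hk'
  have hk0 : (0 : ℝ) ≤ ((k * s : ℕ) : ℝ) := Nat.cast_nonneg _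
  have hk'0 : (0 : ℝ) ≤ ((k' * s : ℕ) : ℝ) := Nat.cast_nonneg _
  rcases lt_trichotomy n m with h | rfl | h
  · linarith [add_add_lt_of_gap hM hgap h]
  · have hlt : k * s < k' * s := by exact_mod_cast (add_lt_add_iff_left _).mp hxy
    have hle : k * s + s ≤ k' * s := by
      rw [← Nat.succ_mul]; exact Nat.mul_le_mul_right _ (Nat.lt_of_mul_lt_mul_right hlt)
    have : ((k * s : ℕ) : ℝ) + s ≤ ((k' * s : ℕ) : ℝ) := by exact_mod_cast hle
    linarith
  · linarith [add_add_lt_of_gap hM hgap h]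

lemma exists_finset_subset_blockGrid_le_sum_inv (hM : 0 ≤ M) (hs : M < s)
    (hgap : ∀ n, b n + K n + M < b (n + 1)) (hpos : ∀ n, 0 < b n) (hK : ∀ n, b n ≤ K n)
    (C : ℝ) : ∃ F : Finset ℝ, ↑F ⊆ blockGrid b K s ∧ C ≤ ∑ x ∈ F, x⁻¹ := by
  have hs0 : 0 < s := by exact_mod_cast hM.trans_lt hs
  obtain ⟨m, hm⟩ := exists_nat_ge (C * (2 * s))
  set I := (Finset.range m).sigma fun n => Finset.range (K n / s + 1)
  set e : (Σ _ : ℕ, ℕ) → ℝ := fun p => b p.1 + ((p.2 * s : ℕ) : ℝ)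
  have hmemI : ∀ p ∈ I, p.2 * s ≤ K p.1 := fun p hp => (Nat.le_div_iff_mul_le hs0).mp
    (Nat.lt_succ_iff.mp (Finset.mem_range.mp (Finset.mem_sigma.mp hp).2))
  have hinj : Set.InjOn e I := by
    rintro ⟨n, k⟩ hp ⟨n', k'⟩ hp' he
    have hk : ((k * s : ℕ) : ℝ) ≤ K n := by exact_mod_cast hmemI _ hp
    have hk' : ((k' * s : ℕ) : ℝ) ≤ K n' := by exact_mod_cast hmemI _ hp'
    have hk0 : (0 : ℝ) ≤ ((k * s : ℕ) : ℝ) := Nat.cast_nonneg _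
    have hk'0 : (0 : ℝ) ≤ ((k' * s : ℕ) : ℝ) := Nat.cast_nonneg _
    simp only [e] at he
    obtain rfl : n = n' := by
      by_contra hne
      rcases lt_or_gt_of_ne hne with h | h <;> linarith [add_add_lt_of_gap hM hgap h]
    have hks : k * s = k' * s := by exact_mod_cast add_left_cancel he
    rw [Nat.mul_right_cancel hs0 hks]
  refine ⟨I.image e, fun x hx => ?_, ?_⟩
  · obtain ⟨p, hp, rfl⟩ := Finset.mem_image.mp hx
    exact ⟨p.1, p.2, hmemI p hp, rfl⟩
  · rw [Finset.sum_image hinj, Finset.sum_sigma]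
    calc C ≤ ∑ _n ∈ Finset.range m, (2 * s : ℝ)⁻¹ := by
          rw [Finset.sum_const, Finset.card_range, nsmul_eq_mul, ← div_eq_mul_inv,
            le_div_iff₀ (by positivity)]
          exact hm
      _ ≤ _ := Finset.sum_le_sum fun n _ => inv_two_mul_le_sum_inv_add (hpos n) (hK n) hs0

end blockGrid

section recursion

variable {M₀ : ℝ} {a : ℕ → ℝ} {K : ℕ → ℕ}

lemma natCast_le_of_rec (hM₀ : 1 ≤ M₀) (hK : ∀ n, 0 < K n) (ha1 : a 1 = 1)
    (harec : ∀ n, 1 ≤ n → a (n + 1) = M₀ * (a n + K n)) {n : ℕ} (hn : 1 ≤ n) :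
    (n : ℝ) ≤ a n := by
  induction n, hn using Nat.le_induction with
  | base => simp [ha1]
  | succ n hn ih =>
    have hK1 : (1 : ℝ) ≤ K n := by exact_mod_cast hK n
    rw [harec n hn]
    push_cast
    nlinarith

lemma exists_add_add_lt_of_rec (hM₀ : 1 < M₀) (hK : ∀ n, 0 < K n) (ha1 : a 1 = 1)
    (harec : ∀ n, 1 ≤ n → a (n + 1) = M₀ * (a n + K n)) (M : ℝ) :
    ∃ n₀, 1 ≤ n₀ ∧ ∀ n, n₀ ≤ n → a n + K n + M < a (n + 1) := by
  obtain ⟨n₀, hn₀⟩ := exists_nat_gt (M / (M₀ - 1))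
  refine ⟨max n₀ 1, le_max_right _ _, fun n hn => ?_⟩
  have hn1 : 1 ≤ n := (le_max_right _ _).trans hn
  have han : (n₀ : ℝ) ≤ a n :=
    (Nat.cast_le.mpr ((le_max_left _ _).trans hn)).trans (natCast_le_of_rec hM₀.le hK ha1 harec hn1)
  rw [div_lt_iff₀ (sub_pos.mpr hM₀)] at hn₀
  rw [harec n hn1]
  nlinarith [mul_nonneg (sub_pos.mpr hM₀).le (K n).cast_nonneg]

end recursion

theorem block_sequence_satisfies_CondSigma
    (M₀ : ℝ) (hM₀ : 1 < M₀)
    (a : ℕ → ℝ) (ha1 : a 1 = 1)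
    (harec : ∀ n : ℕ, 1 ≤ n →
      a (n + 1) = M₀ * (a n + (Nat.factorial (Nat.floor (a n) + 1) : ℝ)))
    (l : ℕ → ℝ) (hmono : StrictMono l)
    (hrange : Set.range l = ⋃ n ∈ {n : ℕ | 1 ≤ n}, blockD a n) :
    ∀ M : ℝ, 0 < M → ∃ φ : ℕ → ℕ, StrictMono φ ∧
      (∀ n, l (φ (n + 1)) - l (φ n) > M) ∧
      Filter.Tendsto (fun N => ∑ n ∈ Finset.range N, (l (φ n))⁻¹)
        Filter.atTop Filter.atTop := by
  intro M hM
  set K : ℕ → ℕ := fun n => (⌊a n⌋₊ + 1).factorial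
  obtain ⟨n₀, hn₀, hgap⟩ :=
    exists_add_add_lt_of_rec hM₀ (K := K) (fun n => Nat.factorial_pos _) ha1 harec M
  have hgap' : ∀ n, a (n₀ + n) + K (n₀ + n) + M < a (n₀ + (n + 1)) :=
    fun n => hgap _ (Nat.le_add_right _ _)
  have hpos : ∀ n, 0 < a (n₀ + n) := fun n =>
    (Nat.cast_pos.mpr (by omega)).trans_le (natCast_le_of_rec hM₀.le (K := K)
      (fun n => Nat.factorial_pos _) ha1 harec (by omega : 1 ≤ n₀ + n))
  have hK : ∀ n, a (n₀ + n) ≤ K (n₀ + n) := fun n => (lt_factorial_floor_add_one _).le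
  have hs : M < ((⌊M⌋₊ + 1 : ℕ) : ℝ) := by push_cast; exact Nat.lt_floor_add_one M
  set S := blockGrid (fun n => a (n₀ + n)) (fun n => K (n₀ + n)) (⌊M⌋₊ + 1)
  have hSl : S ⊆ Set.range l := by
    rintro x ⟨n, k, hk, rfl⟩
    rw [hrange]
    exact Set.mem_biUnion (show 1 ≤ n₀ + n by omega) ⟨k * (⌊M⌋₊ + 1), hk, rfl⟩
  obtain ⟨φ, hφ, hφS⟩ := exists_strictMono_range_comp_eq hSl (blockGrid_infinite hM.le hgap')
  have hmem : ∀ n, l (φ n) ∈ S := fun n => hφS ▸ ⟨n, rfl⟩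
  refine ⟨φ, hφ, fun n => sub_gt_of_mem_blockGrid hM.le hs hgap' (hmem n) (hmem (n + 1))
    (hmono (hφ n.lt_succ_self)), ?_⟩
  refine tendsto_sum_range_comp_atTop (hmono.comp hφ).injective
    (fun n => (inv_pos.mpr (pos_of_mem_blockGrid hpos (hmem n))).le) fun C => ?_
  rw [hφS]
  exact exists_finset_subset_blockGrid_le_sum_inv hM.le hs hgap' hpos hK C
end

section
/- The sequence λ_n = n² (n = 1, 2, …) satisfies condition (Σ') but does not satisfy condition (Σ). More precisely: (a) limsup_{n→∞} (n+1)²/n² = 1, hence i(Λ) = 1 for Λ = (n²); and (b) for every subsequence (μ_n) of (n²) the series ∑_{n=1}^{∞} 1/μ_n converges, so no subsequence of (n²) can satisfy both requirements of condition (Σ). -/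
open Filter Topology

/-- Condition (Σ): for every `M > 0` there is a subsequence `(μ_n) = (l (φ n))`
with `|μ_{n+1}| - |μ_n| > M` for all `n` and `∑ 1/|μ_n| = +∞`. -/
def CondSigma (l : ℕ → ℂ) : Prop :=
  ∀ M : ℝ, 0 < M → ∃ φ : ℕ → ℕ, StrictMono φ ∧
    (∀ n, ‖l (φ (n + 1))‖ - ‖l (φ n)‖ > M) ∧
    Filter.Tendsto (fun N => ∑ n ∈ Finset.range N, (‖l (φ n)‖)⁻¹)
      Filter.atTop Filter.atTop

/-- The limsup of the ratios `|l (φ (n+1))| / |l (φ n)|` along a subsequence `φ`,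
valued in `ℝ≥0∞`. -/
noncomputable def ratioLimsup (l : ℕ → ℂ) (φ : ℕ → ℕ) : ENNReal :=
  Filter.limsup
    (fun n => ENNReal.ofReal (‖l (φ (n + 1))‖ / ‖l (φ n)‖))
    Filter.atTop

/-- `iSeq Λ := inf { limsup |μ_{n+1}/μ_n| : (μ_n) a subsequence of Λ }`. -/
noncomputable def iSeq (l : ℕ → ℂ) : ENNReal :=
  ⨅ φ ∈ {φ : ℕ → ℕ | StrictMono φ}, ratioLimsup l φ

/-!
The consecutive ratios `(n + 2)² / (n + 1)²` tend to `1`, and every ratio along a subsequence of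
an increasing sequence is at least `1`, so `i(Λ) = 1`. On the other hand `∑ 1 / n²` converges,
hence so does `∑ 1 / μ_n` for every subsequence `(μ_n)`, and condition (Σ) fails whatever the
gaps are.
-/

section RatioLimsup

variable {l : ℕ → ℂ}

lemma iSeq_le_ratioLimsup {φ : ℕ → ℕ} (hφ : StrictMono φ) : iSeq l ≤ ratioLimsup l φ :=
  biInf_le _ hφ

lemma one_le_ratioLimsup (hl₀ : ∀ n, l n ≠ 0) (hl : Monotone fun n => ‖l n‖) {φ : ℕ → ℕ}
    (hφ : StrictMono φ) : 1 ≤ ratioLimsup l φ := by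
  have hratio : ∀ n, (1 : ENNReal) ≤ ENNReal.ofReal (‖l (φ (n + 1))‖ / ‖l (φ n)‖) := fun n => by
    rw [ENNReal.one_le_ofReal, one_le_div (norm_pos_iff.mpr (hl₀ _))]
    exact hl (hφ.monotone n.le_succ)
  calc (1 : ENNReal)
      ≤ liminf (fun n => ENNReal.ofReal (‖l (φ (n + 1))‖ / ‖l (φ n)‖)) atTop :=
        le_liminf_of_le (by isBoundedDefault) (Eventually.of_forall hratio)
    _ ≤ ratioLimsup l φ := liminf_le_limsup

lemma ratioLimsup_id_of_tendsto {c : ℝ}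
    (h : Tendsto (fun n => ‖l (n + 1)‖ / ‖l n‖) atTop (𝓝 c)) :
    ratioLimsup l id = ENNReal.ofReal c :=
  ((ENNReal.continuous_ofReal.tendsto c).comp h).limsup_eq

theorem iSeq_eq_one_of_tendsto_ratio (hl₀ : ∀ n, l n ≠ 0) (hl : Monotone fun n => ‖l n‖)
    (h : Tendsto (fun n => ‖l (n + 1)‖ / ‖l n‖) atTop (𝓝 1)) : iSeq l = 1 := by
  refine le_antisymm ?_ (le_iInf₂ fun φ hφ => one_le_ratioLimsup hl₀ hl hφ)
  calc iSeq l ≤ ratioLimsup l id := iSeq_le_ratioLimsup strictMono_id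
    _ = 1 := by rw [ratioLimsup_id_of_tendsto h, ENNReal.ofReal_one]

end RatioLimsup

section Summable

variable {l : ℕ → ℂ}

lemma not_tendsto_sum_inv_norm_of_summable (hl : Summable fun n => ‖l n‖⁻¹) {φ : ℕ → ℕ}
    (hφ : StrictMono φ) :
    ¬ Tendsto (fun N => ∑ n ∈ Finset.range N, ‖l (φ n)‖⁻¹) atTop atTop :=
  not_tendsto_atTop_of_tendsto_nhds (hl.comp_injective hφ.injective).hasSum.tendsto_sum_nat

lemma not_condSigma_of_summable (hl : Summable fun n => ‖l n‖⁻¹) : ¬ CondSigma l := fun h =>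
  let ⟨_, hφ, _, htends⟩ := h 1 one_pos
  not_tendsto_sum_inv_norm_of_summable hl hφ htends

end Summable

lemma norm_natCast_sq (k : ℕ) : ‖(k : ℂ) ^ 2‖ = (k : ℝ) ^ 2 := by
  simp

lemma tendsto_norm_succ_sq_div_norm_sq :
    Tendsto (fun n : ℕ => ‖((n + 2 : ℕ) : ℂ) ^ 2‖ / ‖((n + 1 : ℕ) : ℂ) ^ 2‖) atTop (𝓝 1) := by
  have h := (tendsto_add_mul_div_add_mul_atTop_nhds (2 : ℝ) 1 1 one_ne_zero).pow 2
  rw [div_one, one_pow] at h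
  refine h.congr fun n => ?_
  simp only [norm_natCast_sq, ← div_pow]
  push_cast
  ring_nf

lemma summable_inv_norm_succ_sq : Summable fun n : ℕ => ‖((n + 1 : ℕ) : ℂ) ^ 2‖⁻¹ := by
  simp only [norm_natCast_sq]
  exact (summable_nat_add_iff 1).mpr (Real.summable_nat_pow_inv.mpr one_lt_two)

theorem squares_satisfy_sigma'_not_sigma :
    (Filter.limsup
        (fun n : ℕ =>
          ((‖(((n : ℕ) + 2 : ℕ) : ℂ) ^ 2‖ /
              ‖(((n : ℕ) + 1 : ℕ) : ℂ) ^ 2‖ : ℝ) : EReal))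
        Filter.atTop = (1 : EReal)) ∧
    iSeq (fun n : ℕ => (((n + 1 : ℕ) : ℂ) ^ 2)) = 1 ∧
    (∀ φ : ℕ → ℕ, StrictMono φ →
      Summable fun n => (‖(((φ n + 1 : ℕ)) : ℂ) ^ 2‖)⁻¹) ∧
    (∀ M : ℝ, 0 < M → ¬ ∃ φ : ℕ → ℕ, StrictMono φ ∧
      (∀ n, ‖(((φ (n + 1) + 1 : ℕ)) : ℂ) ^ 2‖ -
          ‖(((φ n + 1 : ℕ)) : ℂ) ^ 2‖ > M) ∧
      Filter.Tendsto
        (fun N => ∑ n ∈ Finset.range N, (‖(((φ n + 1 : ℕ)) : ℂ) ^ 2‖)⁻¹)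
        Filter.atTop Filter.atTop) ∧
    ¬ CondSigma (fun n : ℕ => (((n + 1 : ℕ) : ℂ) ^ 2)) := by
  have hmono : Monotone fun n : ℕ => ‖((n + 1 : ℕ) : ℂ) ^ 2‖ := fun m n hmn => by
    simp only [norm_natCast_sq]
    gcongr
  refine ⟨?_, ?_, fun φ hφ => summable_inv_norm_succ_sq.comp_injective hφ.injective,
    fun _ _ ⟨φ, hφ, _, htends⟩ =>
      not_tendsto_sum_inv_norm_of_summable summable_inv_norm_succ_sq hφ htends,
    not_condSigma_of_summable summable_inv_norm_succ_sq⟩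
  · exact ((continuous_coe_real_ereal.tendsto 1).comp tendsto_norm_succ_sq_div_norm_sq).limsup_eq
  · exact iSeq_eq_one_of_tendsto_ratio
      (fun n => pow_ne_zero 2 (Nat.cast_ne_zero.mpr n.succ_ne_zero)) hmono
      tendsto_norm_succ_sq_div_norm_sq
end
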